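/- Let R be a commutative Bézout domain of stable range 1.5, m ∈ R neither zero nor a unit, and R_m = R/mR. Let φ₁, φ₂, …, φ_n ∈ R_m with φ₁ ∣ φ₂ ∣ ⋯ ∣ φ_n and φ_n ≠ 0. Then there exist elements ψ_{ij} ∈ R_m for 1 ≤ j < i ≤ n, each ψ_{ij} being a generating solution of the equation φ_i = φ_j·x, such that for every permutation σ of {1, 2, …, n}: the product over all i with σ(i) < i of ψ_{i,σ(i)} equals the product over all i with σ(i) > i of ψ_{σ(i),i}. -/

import Mathlib

/-- A commutative ring has stable range 1.5. -/
def HasStableRange15 (R : Type*) [CommRing R] : Prop :=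
  ∀ a b c : R, c ≠ 0 → (∀ d : R, d ∣ a → d ∣ b → d ∣ c → IsUnit d) →
    ∃ r : R, ∀ d : R, d ∣ a + b * r → d ∣ c → IsUnit d

/-!
In `R`, if `d = gcd(a, m)` and `d * γ ∣ gcd(b, m)`, then `γ` divides every solution of
`b ≡ a * x (mod m)`, since the solutions differ by multiples of `m / d`, which is
coprime to `a / d`. Stable range 1.5 lets one shift a particular solution by a multiple of
`m / d` until its gcd with `m` is such a `γ`; these "tight" solutions `c k` of
`φ (k + 1) = φ k * x` are generating and, unlike generating solutions in general, stay tight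
under multiplication, so `ψ i j = c j * ⋯ * c (i - 1)` is generating.

The permutation identity is then a statement about products over intervals: both sides equal
`∏ k, c k ^ N k`, where `N k` counts the `i` that `σ` moves downwards resp. upwards across the
cut between `k` and `k + 1`, and these two numbers agree because `σ` is a bijection.
-/

open Finset

section Crossings

variable {α M : Type*} [CommMonoid M]

theorem Equiv.Perm.card_filter_and_not_apply [Fintype α] (σ : Equiv.Perm α) (p : α → Prop)
    [DecidablePred p] : #{i | p i ∧ ¬p (σ i)} = #{i | p (σ i) ∧ ¬p i} := by
  have hσ : #{i | p (σ i)} = #{i | p i} := Finset.card_equiv σ (by simp)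
  have h₁ := card_filter_add_card_filter_not (s := {i | p i}) (fun i => p (σ i))
  have h₂ := card_filter_add_card_filter_not (s := {i | p (σ i)}) p
  simp only [filter_filter] at h₁ h₂
  have hcomm : #{i | p i ∧ p (σ i)} = #{i | p (σ i) ∧ p i} := by simp only [and_comm]
  omega

theorem prod_prod_Ico_eq_prod_range_pow_card (s : Finset α) (a b : α → ℕ) {N : ℕ}
    (hb : ∀ i ∈ s, b i ≤ N) (c : ℕ → M) :
    ∏ i ∈ s, ∏ k ∈ Ico (a i) (b i), c k = ∏ k ∈ range N, c k ^ #{i ∈ s | a i ≤ k ∧ k < b i} := by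
  rw [prod_comm' (t' := range N) (s' := fun k => {i ∈ s | a i ≤ k ∧ k < b i})]
  · simp only [prod_const]
  · intro i k
    simp only [mem_Ico, mem_filter, mem_range]
    constructor
    · rintro ⟨hi, hk⟩; exact ⟨⟨hi, hk⟩, hk.2.trans_le (hb i hi)⟩
    · rintro ⟨⟨hi, hk⟩, -⟩; exact ⟨hi, hk⟩

theorem prod_prod_Ico_perm [Fintype α] (f : α → ℕ) (σ : Equiv.Perm α) (c : ℕ → M) :
    ∏ i, ∏ k ∈ Ico (f (σ i)) (f i), c k = ∏ i, ∏ k ∈ Ico (f i) (f (σ i)), c k := by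
  have hN : ∀ i, f i ≤ univ.sup f := fun i => le_sup (mem_univ i)
  rw [prod_prod_Ico_eq_prod_range_pow_card _ _ _ (fun i _ => hN i),
    prod_prod_Ico_eq_prod_range_pow_card _ _ _ (fun i _ => hN (σ i))]
  refine prod_congr rfl fun k _ => ?_
  have hcross := σ.card_filter_and_not_apply (fun i => k < f i)
  simp only [not_lt] at hcross
  simp only [and_comm (a := f _ ≤ k)]
  rw [hcross]

theorem prod_filter_prod_Ico_perm [Fintype α] [LinearOrder α] {f : α → ℕ} (hf : StrictMono f)
    (σ : Equiv.Perm α) (c : ℕ → M) :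
    ∏ i with σ i < i, ∏ k ∈ Ico (f (σ i)) (f i), c k =
      ∏ i with i < σ i, ∏ k ∈ Ico (f i) (f (σ i)), c k := by
  have hne : ∀ {i j : α}, ∏ k ∈ Ico (f i) (f j), c k ≠ 1 → i < j := fun {i j} h => by
    by_contra hij
    exact h (by rw [Ico_eq_empty_of_le (hf.monotone (not_lt.mp hij)), prod_empty])
  rw [prod_filter_of_ne fun i _ => hne, prod_filter_of_ne fun i _ => hne]
  exact prod_prod_Ico_perm f σ c

end Crossings

def IsGeneratingSolution {M : Type*} [Monoid M] (a b x : M) : Prop :=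
  b = a * x ∧ ∀ y, b = a * y → x ∣ y

namespace IsBezout

variable {R : Type*} [CommRing R] [IsBezout R]

local notation "π" m => Ideal.Quotient.mk (Ideal.span {m})

theorem mk_dvd_mk_iff (m u w : R) : (π m) u ∣ (π m) w ↔ gcd u m ∣ w := by
  rw [show gcd u m ∣ w ↔ w ∈ Ideal.span {u, m} by rw [← span_gcd, Ideal.mem_span_singleton],
    Ideal.mem_span_pair]
  constructor
  · rintro ⟨y, hy⟩
    obtain ⟨x, rfl⟩ := Ideal.Quotient.mk_surjective y
    rw [← map_mul, Ideal.Quotient.eq, Ideal.mem_span_singleton'] at hy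
    obtain ⟨t, ht⟩ := hy
    exact ⟨x, t, by linear_combination ht⟩
  · rintro ⟨x, t, rfl⟩
    refine ⟨(π m) x, ?_⟩
    rw [← map_mul, Ideal.Quotient.eq, Ideal.mem_span_singleton']
    exact ⟨t, by ring⟩

theorem gcd_ne_zero_of_right {a b : R} (hb : b ≠ 0) : gcd a b ≠ 0 :=
  fun h => hb (zero_dvd_iff.mp (h ▸ gcd_dvd_right a b))

theorem gcd_mul_dvd_mul_gcd (a b m : R) : gcd (a * b) m ∣ gcd a m * gcd b m := by
  rw [← mk_dvd_mk_iff, map_mul, map_mul]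
  exact mul_dvd_mul ((mk_dvd_mk_iff m a _).mpr dvd_rfl) ((mk_dvd_mk_iff m b _).mpr dvd_rfl)

/-- A solution of `b = a * c` in `R ⧸ (m)` with `gcd c m` as small as possible: the reverse
divisibility `gcd b m ∣ gcd a m * gcd c m` holds for every solution. -/
def IsTightSolution (m a b c : R) : Prop :=
  (π m) b = (π m) a * (π m) c ∧ gcd a m * gcd c m ∣ gcd b m

theorem isTightSolution_one (m a : R) : IsTightSolution m a a 1 :=
  ⟨by rw [map_one, mul_one], mul_dvd_mul_left _ (gcd_dvd_left 1 m) |>.trans (mul_one _).dvd⟩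

theorem IsTightSolution.mul {m a b e c d : R} (hc : IsTightSolution m a b c)
    (hd : IsTightSolution m b e d) : IsTightSolution m a e (c * d) := by
  refine ⟨by rw [hd.1, hc.1, map_mul, mul_assoc], ?_⟩
  calc gcd a m * gcd (c * d) m ∣ gcd a m * gcd c m * gcd d m := by
        rw [mul_assoc]; exact mul_dvd_mul_left _ (gcd_mul_dvd_mul_gcd c d m)
    _ ∣ gcd b m * gcd d m := mul_dvd_mul_right hc.2 _
    _ ∣ gcd e m := hd.2

theorem IsTightSolution.prod_Ico {m : R} {a c : ℕ → R} {j i : ℕ} (hji : j ≤ i)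
    (h : ∀ k ∈ Ico j i, IsTightSolution m (a k) (a (k + 1)) (c k)) :
    IsTightSolution m (a j) (a i) (∏ k ∈ Ico j i, c k) := by
  induction i, hji using Nat.le_induction with
  | base => simpa using isTightSolution_one m (a j)
  | succ i hji ih =>
    rw [prod_Ico_succ_top hji]
    exact (ih fun k hk => h k (Ico_subset_Ico_right i.le_succ hk)).mul
      (h i (mem_Ico.mpr ⟨hji, i.lt_succ_self⟩))

variable [IsDomain R]

theorem exists_isCoprime_of_gcd_ne_zero {a b : R} (h : gcd a b ≠ 0) :
    ∃ a' b', a = gcd a b * a' ∧ b = gcd a b * b' ∧ IsCoprime a' b' := by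
  obtain ⟨a', ha⟩ := gcd_dvd_left a b
  obtain ⟨b', hb⟩ := gcd_dvd_right a b
  obtain ⟨u, v, huv⟩ := gcd_eq_sum a b
  refine ⟨a', b', ha, hb, u, v, mul_left_cancel₀ h ?_⟩
  linear_combination huv - u * ha - v * hb

theorem dvd_of_gcd_mul_dvd_gcd {m a b x γ : R} (hm : m ≠ 0)
    (hx : (π m) b = (π m) a * (π m) x) (hγ : gcd a m * γ ∣ gcd b m) : γ ∣ x := by
  have hd := gcd_ne_zero_of_right (a := a) hm
  obtain ⟨a', m', ha, hm', hcop⟩ := exists_isCoprime_of_gcd_ne_zero hd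
  rw [← map_mul, Ideal.Quotient.eq, Ideal.mem_span_singleton'] at hx
  obtain ⟨t, ht⟩ := hx
  have hb : b = gcd a m * (a' * x + m' * t) := by linear_combination -ht + x * ha + t * hm'
  have hγb : γ ∣ a' * x + m' * t := (mul_dvd_mul_iff_left hd).mp <|
    hb ▸ hγ.trans (gcd_dvd_left b m)
  have hγm : γ ∣ m' := (mul_dvd_mul_iff_left hd).mp <| hm' ▸ hγ.trans (gcd_dvd_right b m)
  have hγa : γ ∣ a' * x := by simpa using hγb.sub (hγm.mul_right t)
  exact (hcop.of_isCoprime_of_dvd_right hγm).symm.dvd_of_dvd_mul_left hγa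

theorem IsTightSolution.isGeneratingSolution {m a b c : R} (hm : m ≠ 0)
    (h : IsTightSolution m a b c) : IsGeneratingSolution ((π m) a) ((π m) b) ((π m) c) := by
  refine ⟨h.1, fun y hy => ?_⟩
  obtain ⟨x, rfl⟩ := Ideal.Quotient.mk_surjective y
  exact (mk_dvd_mk_iff m c x).mpr (dvd_of_gcd_mul_dvd_gcd hm hy h.2)

theorem _root_.HasStableRange15.exists_gcd_add_mul_dvd_gcd (hsr : HasStableRange15 R)
    {m : R} (hm : m ≠ 0) (x : R) {y : R} (hy : y ≠ 0) : ∃ r, gcd (x + y * r) m ∣ gcd x y := by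
  obtain ⟨x', y', hx, hy', hcop⟩ :=
    exists_isCoprime_of_gcd_ne_zero (gcd_ne_zero_of_right (a := x) hy)
  obtain ⟨r, hr⟩ := hsr x' y' m hm fun d hdx hdy _ => hcop.isUnit_of_dvd' hdx hdy
  have hw : IsCoprime (x' + y' * r) m := isRelPrime_iff_isCoprime.mp fun d hd hdm => hr d hd hdm
  have hxy : x + y * r = gcd x y * (x' + y' * r) := by linear_combination hx + r * hy'
  refine ⟨r, ?_⟩
  rw [hxy]
  exact (hw.symm.of_isCoprime_of_dvd_left (gcd_dvd_right _ m)).dvd_of_dvd_mul_right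
    (hxy ▸ gcd_dvd_left _ m)

theorem exists_isTightSolution (hsr : HasStableRange15 R) {m a b : R} (hm : m ≠ 0)
    (hab : (π m) a ∣ (π m) b) : ∃ c, IsTightSolution m a b c := by
  have hd := gcd_ne_zero_of_right (a := a) hm
  obtain ⟨a', m', ha, hm', u, v, huv⟩ := exists_isCoprime_of_gcd_ne_zero hd
  obtain ⟨b', hb⟩ := (mk_dvd_mk_iff m a b).mp hab
  have hm'0 : m' ≠ 0 := by rintro rfl; exact hm (by simpa using hm')
  obtain ⟨r, hr⟩ := hsr.exists_gcd_add_mul_dvd_gcd hm (u * b') hm'0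
  have hb' : b = gcd a m * (a' * (u * b') + v * b' * m') := by
    linear_combination hb - gcd a m * b' * huv
  -- `u * b'` is a solution, and so is every shift of it by a multiple of `m' = m / gcd a m`.
  refine ⟨u * b' + m' * r, ?_, ?_⟩
  · rw [← map_mul, Ideal.Quotient.eq, Ideal.mem_span_singleton']
    exact ⟨b' * v - a' * r, by linear_combination (b' * v - a' * r) * hm' - hb +
      (u * b' + m' * r) * ha + gcd a m * b' * huv⟩
  calc gcd a m * gcd (u * b' + m' * r) m ∣ gcd a m * gcd (u * b') m' := mul_dvd_mul_left _ hr
    _ ∣ gcd b m := dvd_gcd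
      ((mul_dvd_mul_left _ (((gcd_dvd_left _ _).mul_left a').add
        ((gcd_dvd_right _ _).mul_left _))).trans hb'.symm.dvd)
      ((mul_dvd_mul_left _ (gcd_dvd_right _ _)).trans hm'.symm.dvd)

end IsBezout

theorem exists_generating_solutions_perm_identity_general
    {R : Type*} [CommRing R] [IsDomain R] [IsBezout R]
    (hsr : HasStableRange15 R)
    (m : R) (hm0 : m ≠ 0)
    (n : ℕ) (φ : ℕ → R ⧸ Ideal.span {m})
    (hchain : ∀ i : ℕ, 1 ≤ i → i < n → φ i ∣ φ (i + 1)) :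
    ∃ ψ : ℕ → ℕ → R ⧸ Ideal.span {m},
      (∀ i j : ℕ, 1 ≤ j → j < i → i ≤ n →
        φ i = φ j * ψ i j ∧
        ∀ x : R ⧸ Ideal.span {m}, φ i = φ j * x → ψ i j ∣ x) ∧
      (∀ σ : Equiv.Perm (Fin n),
        ∏ i ∈ Finset.univ.filter (fun i : Fin n => σ i < i),
            ψ ((i : ℕ) + 1) ((σ i : ℕ) + 1) =
          ∏ i ∈ Finset.univ.filter (fun i : Fin n => i < σ i),
            ψ ((σ i : ℕ) + 1) ((i : ℕ) + 1)) := by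
  choose A hA using fun k => Ideal.Quotient.mk_surjective (φ k)
  have hstep : ∀ k, ∃ c, 1 ≤ k → k < n → IsBezout.IsTightSolution m (A k) (A (k + 1)) c := by
    intro k
    by_cases hk : 1 ≤ k ∧ k < n
    · obtain ⟨c, hc⟩ := IsBezout.exists_isTightSolution hsr hm0 (a := A k) (b := A (k + 1))
        (by rw [hA, hA]; exact hchain k hk.1 hk.2)
      exact ⟨c, fun _ _ => hc⟩
    · exact ⟨0, fun h₁ h₂ => absurd ⟨h₁, h₂⟩ hk⟩
  choose c hc using hstep
  refine ⟨fun i j => Ideal.Quotient.mk _ (∏ k ∈ Ico j i, c k), fun i j hj hji hin => ?_,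
    fun σ => ?_⟩
  · have hgen := (IsBezout.IsTightSolution.prod_Ico hji.le fun k hk =>
      hc k (hj.trans (mem_Ico.mp hk).1) ((mem_Ico.mp hk).2.trans_le hin)).isGeneratingSolution hm0
    rwa [hA, hA] at hgen
  · simp only [map_prod]
    exact prod_filter_prod_Ico_perm (Fin.val_strictMono.add_const 1) σ _

/-- For a divisibility chain `φ₁ ∣ φ₂ ∣ ⋯ ∣ φ_n ≠ 0` in `R/mR`, there is a choice of
generating solutions `ψ i j` of the equations `φ_i = φ_j * x` (for `1 ≤ j < i ≤ n`)
such that for every permutation `σ` of `{1, …, n}` (modelled as `Fin n`, the element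
`i : Fin n` corresponding to the integer `i + 1`), the product over all `i` with
`σ(i) < i` of `ψ i (σ i)` equals the product over all `i` with `σ(i) > i` of
`ψ (σ i) i`. -/
theorem exists_generating_solutions_perm_identity
    {R : Type*} [CommRing R] [IsDomain R] [IsBezout R]
    (hsr : HasStableRange15 R)
    (m : R) (hm0 : m ≠ 0) (hmu : ¬ IsUnit m)
    (n : ℕ) (φ : ℕ → R ⧸ Ideal.span {m})
    (hchain : ∀ i : ℕ, 1 ≤ i → i < n → φ i ∣ φ (i + 1))
    (hφn : φ n ≠ 0) :
    ∃ ψ : ℕ → ℕ → R ⧸ Ideal.span {m},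
      (∀ i j : ℕ, 1 ≤ j → j < i → i ≤ n →
        φ i = φ j * ψ i j ∧
        ∀ x : R ⧸ Ideal.span {m}, φ i = φ j * x → ψ i j ∣ x) ∧
      (∀ σ : Equiv.Perm (Fin n),
        ∏ i ∈ Finset.univ.filter (fun i : Fin n => σ i < i),
            ψ ((i : ℕ) + 1) ((σ i : ℕ) + 1) =
          ∏ i ∈ Finset.univ.filter (fun i : Fin n => i < σ i),
            ψ ((σ i : ℕ) + 1) ((i : ℕ) + 1)) :=
  exists_generating_solutions_perm_identity_general hsr m hm0 n φ hchain
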